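/- In the torus example X = 𝕋 ∪ H, every surjective isometry φ of (X, d) is of one of the following two forms for some a ∈ ℝ: either φ(y) = g(a) + y for y ∈ 𝕋 and φ(g(t), t) = (g(t + a), t + a) on H, or φ(y) = g(2a) − y for y ∈ 𝕋 and φ(g(t), t) = (g(2a − t), 2a − t) on H. -/

import Mathlib

/-- The distance of the Z-construction on the disjoint union `Y ⊕ (Y × ℝ)`. -/
noncomputable def zdist {Y : Type*} [MetricSpace Y] (R M : ℝ) :
    Y ⊕ Y × ℝ → Y ⊕ Y × ℝ → ℝ
  | Sum.inl y₁, Sum.inl y₂ => dist y₁ y₂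
  | Sum.inl y₁, Sum.inr q => dist y₁ q.1 + R
  | Sum.inr p, Sum.inl y₂ => dist p.1 y₂ + R
  | Sum.inr p, Sum.inr q => dist p.1 q.1 + min |p.2 - q.2| M

/-- The 2-torus `𝕋 = AddCircle 1 × AddCircle 1` with the product (max) metric. -/
abbrev T2 : Type := AddCircle (1 : ℝ) × AddCircle (1 : ℝ)

/-- The dense one-parameter subgroup `g(t) = (t mod 1, αt mod 1)` of the torus. -/
noncomputable def torusFlow (α : ℝ) (t : ℝ) : T2 :=
  ((t : AddCircle (1 : ℝ)), ((α * t : ℝ) : AddCircle (1 : ℝ)))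

/-- The space `X = 𝕋 ∪ H` where `H = {(g(t), t) : t ∈ ℝ}`, as a subset of
`Z = 𝕋 ⊕ (𝕋 × ℝ)`. -/
def torusX (α : ℝ) : Set (T2 ⊕ T2 × ℝ) :=
  {z | ∃ y : T2, z = Sum.inl y} ∪ {z | ∃ t : ℝ, z = Sum.inr (torusFlow α t, t)}

theorem memT (α : ℝ) (y : T2) : (Sum.inl y : T2 ⊕ T2 × ℝ) ∈ torusX α :=
  Or.inl ⟨y, rfl⟩

theorem memH (α : ℝ) (t : ℝ) :
    (Sum.inr (torusFlow α t, t) : T2 ⊕ T2 × ℝ) ∈ torusX α :=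
  Or.inr ⟨t, rfl⟩

/-!
Points of `𝕋` and of `H` are at distance at least `R`, while `𝕋` and `H` are each connected by
chains of steps shorter than `R`; so `φ` maps each of `𝕋` and `H` into one of the two sides. `H`
does not fit into `𝕋`, which has diameter `1 / 2`, so surjectivity forces `φ(𝕋) ⊆ 𝕋` and
`φ(H) ⊆ H`. Hence `φ` is given by an isometry `Φ` of `𝕋` and a map `f` of `ℝ` with
`Φ ∘ g = g ∘ f`. Then `f` preserves `min |t - s| M`, which makes it an isometry of `ℝ`,
`t ↦ t + a` or `t ↦ 2a - t`; and `Φ` is determined by `f` because `g(ℝ)` is dense for irrational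
`α`.
-/

open Function Filter Topology Relation

theorem Relation.reflTransGen_of_preconnectedSpace {S X : Type*} [TopologicalSpace S]
    [PreconnectedSpace S] {r : X → X → Prop} (f : S → X)
    (h : ∀ x, ∀ᶠ y in 𝓝 x, r (f x) (f y) ∧ r (f y) (f x)) (x y : S) :
    ReflTransGen r (f x) (f y) :=
  PreconnectedSpace.induction₂' (fun a b => ReflTransGen r (f a) (f b))
    (fun x => (h x).mono fun _ hy => ⟨.single hy.1, .single hy.2⟩) ⟨fun _ _ _ => .trans⟩ x y

theorem abs_sub_eq_two_mul_of_abs_sub_eq {a b c r : ℝ} (hab : |a - b| = r) (hbc : |b - c| = r)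
    (hac : a ≠ c) : |a - c| = 2 * r := by
  grind

theorem Real.isometry_of_dist_eq_of_dist_le {f : ℝ → ℝ} (hf : Injective f) {c : ℝ} (hc : 0 < c)
    (h : ∀ t s, dist t s ≤ c → dist (f t) (f s) = dist t s) : Isometry f := by
  suffices H : ∀ n : ℕ, ∀ t s, dist t s ≤ 2 ^ n * c → dist (f t) (f s) = dist t s by
    refine Isometry.of_dist_eq fun t s => ?_
    obtain ⟨n, hn⟩ := pow_unbounded_of_one_lt (dist t s / c) one_lt_two
    exact H n t s ((div_lt_iff₀ hc).1 hn).le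
  intro n
  induction n with
  | zero => simpa using h
  | succ n ih =>
    intro t s hts
    rcases eq_or_ne t s with rfl | hne
    · simp
    have hm : dist t ((t + s) / 2) = dist t s / 2 ∧ dist ((t + s) / 2) s = dist t s / 2 := by
      simp only [Real.dist_eq, show t - (t + s) / 2 = (t - s) / 2 by ring,
        show (t + s) / 2 - s = (t - s) / 2 by ring, abs_div, abs_two, and_self]
    have hle : dist t s / 2 ≤ 2 ^ n * c := by rw [pow_succ] at hts; linarith
    have h1 := ih _ _ (hm.1.trans_le hle)
    have h2 := ih _ _ (hm.2.trans_le hle)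
    rw [hm.1, Real.dist_eq] at h1
    rw [hm.2, Real.dist_eq] at h2
    rw [Real.dist_eq, abs_sub_eq_two_mul_of_abs_sub_eq h1 h2 (hf.ne hne)]
    ring

theorem Real.isometry_of_min_dist_eq {f : ℝ → ℝ} {M : ℝ} (hM : 0 < M)
    (h : ∀ t s, min (dist (f t) (f s)) M = min (dist t s) M) : Isometry f := by
  refine Real.isometry_of_dist_eq_of_dist_le (fun t s hts => dist_eq_zero.1 ?_) (half_pos hM)
    fun t s hts => ?_
  · have := h t s
    rw [hts, dist_self] at this
    grind
  · have := h t s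
    grind

theorem Real.eq_add_or_eq_sub_of_isometry {f : ℝ → ℝ} (hf : Isometry f) :
    (∀ t, f t = t + f 0) ∨ ∀ t, f t = f 0 - t := by
  have hsq (t s : ℝ) : (f t - f s) ^ 2 = (t - s) ^ 2 := by
    rw [← sq_abs, ← Real.dist_eq, hf.dist_eq, Real.dist_eq, sq_abs]
  rcases sq_eq_sq_iff_eq_or_eq_neg.1 (hsq 1 0) with h1 | h1
  · left; intro t; nlinarith [hsq t 0, hsq t 1]
  · right; intro t; nlinarith [hsq t 0, hsq t 1]

section ZDist

variable {Y : Type*} [MetricSpace Y] {R M : ℝ}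

@[simp] theorem zdist_inl_inl (y₁ y₂ : Y) : zdist R M (.inl y₁) (.inl y₂) = dist y₁ y₂ := rfl

@[simp] theorem zdist_inl_inr (y : Y) (q : Y × ℝ) :
    zdist R M (.inl y) (.inr q) = dist y q.1 + R := rfl

@[simp] theorem zdist_inr_inl (p : Y × ℝ) (y : Y) :
    zdist R M (.inr p) (.inl y) = dist p.1 y + R := rfl

@[simp] theorem zdist_inr_inr (p q : Y × ℝ) :
    zdist R M (.inr p) (.inr q) = dist p.1 q.1 + min |p.2 - q.2| M := rfl

theorem zdist_comm (p q : Y ⊕ Y × ℝ) : zdist R M p q = zdist R M q p := by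
  rcases p with _ | _ <;> rcases q with _ | _ <;> simp [dist_comm, abs_sub_comm]

theorem isLeft_eq_of_zdist_lt {p q : Y ⊕ Y × ℝ} (h : zdist R M p q < R) :
    p.isLeft = q.isLeft := by
  rcases p with y | p <;> rcases q with z | q
  · rfl
  · exact absurd h (not_lt.2 (le_add_of_nonneg_left dist_nonneg))
  · exact absurd h (not_lt.2 (le_add_of_nonneg_left dist_nonneg))
  · rfl

theorem isLeft_eq_of_reflTransGen {p q : Y ⊕ Y × ℝ}
    (h : ReflTransGen (fun p q => zdist R M p q < R) p q) : p.isLeft = q.isLeft := by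
  induction h with
  | refl => rfl
  | tail _ hbc ih => exact ih.trans (isLeft_eq_of_zdist_lt hbc)

end ZDist

namespace TorusExample

variable {α R M : ℝ}

theorem torusFlow_add (α t s : ℝ) : torusFlow α (t + s) = torusFlow α t + torusFlow α s := by
  simp [torusFlow, mul_add]

theorem torusFlow_sub (α t s : ℝ) : torusFlow α (t - s) = torusFlow α t - torusFlow α s := by
  simp [torusFlow, mul_sub]

theorem continuous_torusFlow (α : ℝ) : Continuous (torusFlow α) := by
  unfold torusFlow; fun_prop

theorem dist_le_half (y z : T2) : dist y z ≤ 1 / 2 := by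
  have h (u v : AddCircle (1 : ℝ)) : dist u v ≤ 1 / 2 := by
    simpa [dist_eq_norm] using AddCircle.norm_le_half_period 1 (x := u - v) one_ne_zero
  exact max_le (h _ _) (h _ _)

theorem half_le_dist_torusFlow_zero_half (α : ℝ) :
    1 / 2 ≤ dist (torusFlow α 0) (torusFlow α (1 / 2)) := by
  refine le_trans ?_ (le_max_left _ _)
  have := AddCircle.norm_half_period_eq (p := (1 : ℝ))
  simp_all [torusFlow, dist_eq_norm]

theorem denseRange_torusFlow {α : ℝ} (hα : Irrational α) : DenseRange (torusFlow α) := by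
  let G : ℝ × AddCircle (1 : ℝ) → T2 := fun p =>
    ((p.1 : AddCircle (1 : ℝ)), ((α * p.1 : ℝ) : AddCircle (1 : ℝ)) + p.2)
  have hG : Surjective G := by
    rintro ⟨u, v⟩
    obtain ⟨t, rfl⟩ := QuotientAddGroup.mk_surjective u
    exact ⟨(t, v - ((α * t : ℝ) : AddCircle (1 : ℝ))), by simp [G]⟩
  have hmul : DenseRange (· • (α : AddCircle (1 : ℝ)) : ℤ → AddCircle (1 : ℝ)) :=
    AddCircle.denseRange_zsmul_coe_iff.2 (by simpa using hα)
  refine (hG.denseRange.comp (denseRange_id.prodMap hmul) (by fun_prop)).mono ?_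
  -- `torusFlow α (t + n) = G (t, n • α)`
  rintro _ ⟨⟨t, n⟩, rfl⟩
  refine ⟨t + n, Prod.ext (by simp [G, torusFlow]) ?_⟩
  simp only [G, torusFlow, comp_apply, Prod.map_apply, id_eq]
  rw [mul_add, AddCircle.coe_add, mul_comm α (n : ℝ), ← zsmul_eq_mul, AddCircle.coe_zsmul]

theorem zdist_le_half_of_isLeft {p q : T2 ⊕ T2 × ℝ} (hp : p.isLeft) (hq : q.isLeft) :
    zdist R M p q ≤ 1 / 2 := by
  obtain ⟨y, rfl⟩ := Sum.isLeft_iff.1 hp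
  obtain ⟨z, rfl⟩ := Sum.isLeft_iff.1 hq
  exact dist_le_half y z

abbrev torusPt (α : ℝ) (y : T2) : torusX α := ⟨.inl y, memT α y⟩

noncomputable abbrev flowPt (α t : ℝ) : torusX α := ⟨.inr (torusFlow α t, t), memH α t⟩

theorem torusX_cases (x : torusX α) : (∃ y, x = torusPt α y) ∨ ∃ t, x = flowPt α t := by
  rcases x with ⟨_, ⟨y, rfl⟩ | ⟨t, rfl⟩⟩
  exacts [.inl ⟨y, rfl⟩, .inr ⟨t, rfl⟩]

theorem half_lt_zdist_flowPt (hM : 0 < M) :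
    1 / 2 < zdist R M (flowPt α 0).1 (flowPt α (1 / 2)).1 := by
  have := half_le_dist_torusFlow_zero_half α
  have : 0 < min |(0 : ℝ) - 1 / 2| M := lt_min (by norm_num) hM
  simp only [zdist_inr_inr]
  linarith

def Chained (R M : ℝ) : torusX α → torusX α → Prop :=
  ReflTransGen fun p q => zdist R M p.1 q.1 < R

theorem Chained.isLeft_eq {p q : torusX α} (h : Chained R M p q) : p.1.isLeft = q.1.isLeft :=
  isLeft_eq_of_reflTransGen <|
    ReflTransGen.lift (p := fun p q => zdist R M p q < R) _ (fun _ _ => id) _ _ h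

theorem chained_torusPt (hR : 0 < R) (y z : T2) : Chained R M (torusPt α y) (torusPt α z) := by
  refine reflTransGen_of_preconnectedSpace (torusPt α) (fun y => ?_) y z
  filter_upwards [Metric.ball_mem_nhds y hR] with z hz
  exact ⟨by simpa using (Metric.mem_ball'.1 hz), by simpa using hz⟩

theorem chained_flowPt (hR : 0 < R) (hM : 0 ≤ M) (t s : ℝ) :
    Chained R M (flowPt α t) (flowPt α s) := by
  refine reflTransGen_of_preconnectedSpace (flowPt α) (fun t => ?_) t s
  have hcont : Continuous fun s => zdist R M (flowPt α t).1 (flowPt α s).1 := by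
    simp only [zdist_inr_inr]
    have := continuous_torusFlow α
    fun_prop
  have hnear := (hcont.tendsto t).eventually_lt_const (by simpa [min_eq_left hM])
  filter_upwards [hnear] with s hs
  exact ⟨hs, by rwa [zdist_comm]⟩

section Isometry

def PreservesZDist (R M : ℝ) (φ : torusX α → torusX α) : Prop :=
  ∀ p q, zdist R M (φ p).1 (φ q).1 = zdist R M p.1 q.1

variable {φ : torusX α → torusX α}

theorem Chained.map (hφ : PreservesZDist R M φ) {p q : torusX α} (h : Chained R M p q) :
    Chained R M (φ p) (φ q) :=
  h.lift φ fun _ _ hab => by rwa [onFun, hφ]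

theorem isLeft_map_torusPt_eq (hφ : PreservesZDist R M φ) (hR : 0 < R) (y z : T2) :
    (φ (torusPt α y)).1.isLeft = (φ (torusPt α z)).1.isLeft :=
  ((chained_torusPt hR y z).map hφ).isLeft_eq

theorem isLeft_map_flowPt_eq (hφ : PreservesZDist R M φ) (hR : 0 < R) (hM : 0 ≤ M) (t s : ℝ) :
    (φ (flowPt α t)).1.isLeft = (φ (flowPt α s)).1.isLeft :=
  ((chained_flowPt hR hM t s).map hφ).isLeft_eq

theorem isLeft_map (hφ : PreservesZDist R M φ) (hR : 0 < R) (hM : 0 < M) (hsurj : Surjective φ) :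
    (∀ y, (φ (torusPt α y)).1.isLeft) ∧ ∀ t, (φ (flowPt α t)).1.isLeft = false := by
  set a := (φ (torusPt α 0)).1.isLeft
  set b := (φ (flowPt α 0)).1.isLeft
  have hab (x : torusX α) : (φ x).1.isLeft = a ∨ (φ x).1.isLeft = b := by
    rcases torusX_cases x with ⟨y, rfl⟩ | ⟨t, rfl⟩
    exacts [.inl (isLeft_map_torusPt_eq hφ hR y 0), .inr (isLeft_map_flowPt_eq hφ hR hM.le t 0)]
  obtain ⟨x, hx⟩ := hsurj (torusPt α 0)
  have hb : b = false := by
    refine Bool.eq_false_iff.2 fun hb => ?_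
    have := zdist_le_half_of_isLeft (R := R) (M := M) hb
      ((isLeft_map_flowPt_eq hφ hR hM.le (1 / 2) 0).trans hb)
    rw [hφ] at this
    linarith [half_lt_zdist_flowPt (α := α) (R := R) hM]
  have ha : a = true := by
    have := hab x
    rw [hx, hb] at this
    exact (this.resolve_right (by simp)).symm
  exact ⟨fun y => (isLeft_map_torusPt_eq hφ hR y 0).trans ha,
    fun t => (isLeft_map_flowPt_eq hφ hR hM.le t 0).trans hb⟩

theorem exists_map_torusPt_map_flowPt (hφ : PreservesZDist R M φ) (hR : 0 < R) (hM : 0 < M)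
    (hsurj : Surjective φ) :
    ∃ (Φ : T2 → T2) (f : ℝ → ℝ),
      (∀ y, φ (torusPt α y) = torusPt α (Φ y)) ∧ ∀ t, φ (flowPt α t) = flowPt α (f t) := by
  obtain ⟨hT, hH⟩ := isLeft_map hφ hR hM hsurj
  have hΦ (y : T2) : ∃ z, φ (torusPt α y) = torusPt α z :=
    (torusX_cases _).resolve_right fun ⟨t, ht⟩ => by simpa [ht] using hT y
  have hf (t : ℝ) : ∃ s, φ (flowPt α t) = flowPt α s :=
    (torusX_cases _).resolve_left fun ⟨y, hy⟩ => by simpa [hy] using hH t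
  choose Φ hΦ using hΦ
  choose f hf using hf
  exact ⟨Φ, f, hΦ, hf⟩

variable {Φ : T2 → T2} {f : ℝ → ℝ}

theorem isometry_of_map_torusPt (hφ : PreservesZDist R M φ)
    (hΦ : ∀ y, φ (torusPt α y) = torusPt α (Φ y)) : Isometry Φ :=
  Isometry.of_dist_eq fun y z => by simpa [hΦ] using hφ (torusPt α y) (torusPt α z)

theorem map_torusFlow (hφ : PreservesZDist R M φ)
    (hΦ : ∀ y, φ (torusPt α y) = torusPt α (Φ y)) (hf : ∀ t, φ (flowPt α t) = flowPt α (f t))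
    (t : ℝ) : Φ (torusFlow α t) = torusFlow α (f t) := by
  simpa [hΦ, hf] using hφ (torusPt α (torusFlow α t)) (flowPt α t)

theorem min_dist_eq (hφ : PreservesZDist R M φ)
    (hΦ : ∀ y, φ (torusPt α y) = torusPt α (Φ y)) (hf : ∀ t, φ (flowPt α t) = flowPt α (f t))
    (t s : ℝ) : min (dist (f t) (f s)) M = min (dist t s) M := by
  have := hφ (flowPt α t) (flowPt α s)
  simp only [hf, zdist_inr_inr, ← map_torusFlow hφ hΦ hf,
    (isometry_of_map_torusPt hφ hΦ).dist_eq] at this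
  simpa [Real.dist_eq] using this

end Isometry

end TorusExample

open TorusExample in
/-- every surjective isometry `φ` of the torus example `X = 𝕋 ∪ H`
is, for some `a ∈ ℝ`, either the translation `φ(y) = g(a) + y`,
`φ(g(t), t) = (g(t+a), t+a)`, or the reflection `φ(y) = g(2a) - y`,
`φ(g(t), t) = (g(2a-t), 2a-t)`. -/
theorem torus_isometry_classification (α : ℝ) (hα : Irrational α)
    (R M : ℝ) (hM : 0 < M) (hRM : M ≤ 2 * R)
    (φ : torusX α → torusX α) (hφsurj : Function.Surjective φ)
    (hφiso : ∀ p q : torusX α, zdist R M (φ p).1 (φ q).1 = zdist R M p.1 q.1) :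
    ∃ a : ℝ,
      ((∀ y : T2, (φ ⟨Sum.inl y, memT α y⟩).1 = Sum.inl (torusFlow α a + y)) ∧
        (∀ t : ℝ, (φ ⟨Sum.inr (torusFlow α t, t), memH α t⟩).1 =
            Sum.inr (torusFlow α (t + a), t + a))) ∨
      ((∀ y : T2, (φ ⟨Sum.inl y, memT α y⟩).1 = Sum.inl (torusFlow α (2 * a) - y)) ∧
        (∀ t : ℝ, (φ ⟨Sum.inr (torusFlow α t, t), memH α t⟩).1 =
            Sum.inr (torusFlow α (2 * a - t), 2 * a - t))) := by
  obtain ⟨Φ, f, hΦ, hf⟩ := exists_map_torusPt_map_flowPt hφiso (by linarith) hM hφsurj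
  have hΦf := map_torusFlow hφiso hΦ hf
  have hΦ_eq {ψ : T2 → T2} (hψ : Continuous ψ) (h : ∀ t, ψ (torusFlow α t) = torusFlow α (f t)) :
      Φ = ψ := (denseRange_torusFlow hα).equalizer (isometry_of_map_torusPt hφiso hΦ).continuous hψ
    (funext fun t => by simp [hΦf, h])
  rcases Real.eq_add_or_eq_sub_of_isometry
      (Real.isometry_of_min_dist_eq hM (min_dist_eq hφiso hΦ hf)) with hf' | hf'
  · have hΦ' : Φ = (torusFlow α (f 0) + ·) := hΦ_eq (by fun_prop) fun t => by
      rw [hf' t, add_comm, torusFlow_add]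
    refine ⟨f 0, .inl ⟨fun y => ?_, fun t => ?_⟩⟩
    · rw [hΦ y, hΦ']
    · rw [hf t, hf' t]
  · have hΦ' : Φ = (torusFlow α (2 * (f 0 / 2)) - ·) := hΦ_eq (by fun_prop) fun t => by
      rw [hf' t, mul_div_cancel₀ _ two_ne_zero, torusFlow_sub]
    refine ⟨f 0 / 2, .inr ⟨fun y => ?_, fun t => ?_⟩⟩
    · rw [hΦ y, hΦ']
    · rw [hf t, hf' t, mul_div_cancel₀ _ two_ne_zero]
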